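/- arXiv:2409.04973 — 2 statements merged into one kernel-verified Lean document; each statement's English description precedes it below -/
import Mathlib

section
/- Let X be a real Banach space, p ≥ 2, σ > 0, and let θ : X → ℝ be p-convex with constant σ. Suppose ξ ∈ X* is a subgradient of θ at x ∈ X, ξ' ∈ X*, and x' ∈ X is a minimizer of the map z ↦ θ(z) − ⟨ξ', z⟩ over X. Then for every x̂ ∈ X, D_{ξ'}θ(x̂, x') − D_ξθ(x̂, x) ≤ (1 / (p* (2σ)^{p*−1})) ‖ξ' − ξ‖^{p*} + ⟨ξ' − ξ, x − x̂⟩, where p* := p/(p−1). -/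
/-!
Letting `t → 0` in the `p`-convexity inequality on the segment from `x` to `x'` upgrades the
subgradient inequality at `x` to `D_ξ θ(x', x) ≥ σ ‖x' - x‖ ^ p`. The three-point identity for
Bregman distances reduces the claim to bounding `⟨ξ' - ξ, x' - x⟩ - D_ξ θ(x', x)`, hence
`‖ξ' - ξ‖ r - σ r ^ p` with `r = ‖x' - x‖`; Young's inequality with weight `2σ` bounds this by
the conjugate term, because `2σ / p ≤ σ` for `p ≥ 2`.
-/

open Filter Topology

namespace Real

theorem young_inequality_of_nonneg_scaled {a b c p q : ℝ} (ha : 0 ≤ a) (hb : 0 ≤ b) (hc : 0 < c)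
    (hpq : p.HolderConjugate q) :
    a * b ≤ c / p * a ^ p + 1 / (q * c ^ (q - 1)) * b ^ q := by
  set s := c ^ (1 / p)
  have hs : 0 < s := rpow_pos_of_pos hc _
  have hsa : (s * a) ^ p = c * a ^ p := by
    rw [mul_rpow hs.le ha, ← rpow_mul hc.le, one_div_mul_cancel hpq.ne_zero, rpow_one]
  have hbs : (b / s) ^ q = b ^ q / c ^ (q - 1) := by
    rw [div_rpow hb hs.le, ← rpow_mul hc.le, one_div_mul_eq_div, hpq.symm.div_conj_eq_sub_one]
  calc a * b = (s * a) * (b / s) := by field_simp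
    _ ≤ (s * a) ^ p / p + (b / s) ^ q / q :=
        young_inequality_of_nonneg (by positivity) (by positivity) hpq
    _ = c / p * a ^ p + 1 / (q * c ^ (q - 1)) * b ^ q := by rw [hsa, hbs]; ring

end Real

section Bregman

variable {X : Type*} [SeminormedAddCommGroup X] [NormedSpace ℝ X]

def PConvexWith (p σ : ℝ) (θ : X → ℝ) : Prop :=
  ∀ x xbar : X, ∀ t : ℝ, t ∈ Set.Icc (0:ℝ) 1 →
    θ (t • x + (1 - t) • xbar) + σ * t * (1 - t) * ‖x - xbar‖ ^ p ≤ t * θ x + (1 - t) * θ xbar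

def bregmanDist (θ : X → ℝ) (ξ : X →L[ℝ] ℝ) (xbar x : X) : ℝ :=
  θ xbar - θ x - ξ (xbar - x)

theorem bregmanDist_sub_bregmanDist (θ : X → ℝ) (ξ ξ' : X →L[ℝ] ℝ) (x x' xhat : X) :
    bregmanDist θ ξ' xhat x' - bregmanDist θ ξ xhat x
      = (ξ' - ξ) (x - xhat) + ((ξ' - ξ) (x' - x) - bregmanDist θ ξ x' x) := by
  simp only [bregmanDist, sub_apply, map_sub]
  ring

theorem PConvexWith.mul_norm_rpow_le_bregmanDist {p σ : ℝ} {θ : X → ℝ} (hθ : PConvexWith p σ θ)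
    {x : X} {ξ : X →L[ℝ] ℝ} (hξ : ∀ xbar : X, θ x + ξ (xbar - x) ≤ θ xbar) (y : X) :
    σ * ‖y - x‖ ^ p ≤ bregmanDist θ ξ y x := by
  have hsegment : ∀ t ∈ Set.Ioo (0:ℝ) 1, σ * (1 - t) * ‖y - x‖ ^ p ≤ bregmanDist θ ξ y x := by
    intro t ht
    have hconv := hθ y x t ⟨ht.1.le, ht.2.le⟩
    have hsub := hξ (t • y + (1 - t) • x)
    rw [show t • y + (1 - t) • x - x = t • (y - x) by module, map_smul, smul_eq_mul] at hsub
    refine le_of_mul_le_mul_left ?_ ht.1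
    unfold bregmanDist
    nlinarith
  have hlim : Tendsto (fun t : ℝ => σ * (1 - t) * ‖y - x‖ ^ p) (𝓝[>] 0) (𝓝 (σ * ‖y - x‖ ^ p)) := by
    refine tendsto_nhdsWithin_of_tendsto_nhds ?_
    exact (by fun_prop : Continuous fun t : ℝ => σ * (1 - t) * ‖y - x‖ ^ p).tendsto' 0 _ (by simp)
  exact le_of_tendsto hlim (mem_of_superset (Ioo_mem_nhdsGT one_pos) hsegment)

end Bregman

theorem bregman_three_point_estimate_of_pconvex_general
    {X : Type*} [NormedAddCommGroup X] [NormedSpace ℝ X]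
    (p σ : ℝ) (hp : 2 ≤ p) (hσ : 0 < σ) (θ : X → ℝ)
    (hθ : ∀ x xbar : X, ∀ t : ℝ, t ∈ Set.Icc (0:ℝ) 1 →
      θ (t • x + (1 - t) • xbar) + σ * t * (1 - t) * ‖x - xbar‖ ^ p
        ≤ t * θ x + (1 - t) * θ xbar)
    (x : X) (ξ : X →L[ℝ] ℝ) (hξ : ∀ xbar : X, θ x + ξ (xbar - x) ≤ θ xbar)
    (ξ' : X →L[ℝ] ℝ) (x' : X) :
    ∀ xhat : X,
      (θ xhat - θ x' - ξ' (xhat - x')) - (θ xhat - θ x - ξ (xhat - x))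
        ≤ (1 / ((p / (p - 1)) * (2 * σ) ^ (p / (p - 1) - 1))) * ‖ξ' - ξ‖ ^ (p / (p - 1))
          + (ξ' - ξ) (x - xhat) := by
  intro xhat
  have hstrong : σ * ‖x' - x‖ ^ p ≤ bregmanDist θ ξ x' x :=
    PConvexWith.mul_norm_rpow_le_bregmanDist hθ hξ x'
  have hpair : (ξ' - ξ) (x' - x) ≤ ‖x' - x‖ * ‖ξ' - ξ‖ :=
    (le_abs_self _).trans (((ξ' - ξ).le_opNorm _).trans_eq (mul_comm _ _))
  have hconj : p.HolderConjugate (p / (p - 1)) := .conjExponent (by linarith)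
  have hyoung := Real.young_inequality_of_nonneg_scaled (norm_nonneg (x' - x))
    (norm_nonneg (ξ' - ξ)) (by positivity : 0 < 2 * σ) hconj
  have habsorb : 2 * σ / p * ‖x' - x‖ ^ p ≤ σ * ‖x' - x‖ ^ p := by
    gcongr
    rw [div_le_iff₀ (by linarith)]
    nlinarith
  change bregmanDist θ ξ' xhat x' - bregmanDist θ ξ xhat x ≤ _
  rw [bregmanDist_sub_bregmanDist]
  linarith

/-- Let `X` be a real Banach space, `θ : X → ℝ` `p`-convex with constant
`σ > 0`, `p ≥ 2`.  Suppose `ξ` is a subgradient of `θ` at `x`, `ξ' ∈ X*`, and `x'` minimizes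
`z ↦ θ(z) − ⟨ξ', z⟩` over `X`.  Then for every `xhat`,
`D_{ξ'}θ(xhat, x') − D_ξθ(xhat, x) ≤ (1/(p* (2σ)^(p*−1))) ‖ξ' − ξ‖^(p*) + ⟨ξ' − ξ, x − xhat⟩`,
where `p* = p/(p−1)`. -/
theorem bregman_three_point_estimate_of_pconvex
    {X : Type*} [NormedAddCommGroup X] [NormedSpace ℝ X] [CompleteSpace X]
    (p σ : ℝ) (hp : 2 ≤ p) (hσ : 0 < σ) (θ : X → ℝ)
    (hθ : ∀ x xbar : X, ∀ t : ℝ, t ∈ Set.Icc (0:ℝ) 1 →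
      θ (t • x + (1 - t) • xbar) + σ * t * (1 - t) * ‖x - xbar‖ ^ p
        ≤ t * θ x + (1 - t) * θ xbar)
    (x : X) (ξ : X →L[ℝ] ℝ) (hξ : ∀ xbar : X, θ x + ξ (xbar - x) ≤ θ xbar)
    (ξ' : X →L[ℝ] ℝ) (x' : X)
    (hx' : ∀ z : X, θ x' - ξ' x' ≤ θ z - ξ' z) :
    ∀ xhat : X,
      (θ xhat - θ x' - ξ' (xhat - x')) - (θ xhat - θ x - ξ (xhat - x))
        ≤ (1 / ((p / (p - 1)) * (2 * σ) ^ (p / (p - 1) - 1))) * ‖ξ' - ξ‖ ^ (p / (p - 1))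
          + (ξ' - ξ) (x - xhat) :=
  bregman_three_point_estimate_of_pconvex_general p σ hp hσ θ hθ x ξ hξ ξ' x'
end

section
/- Let X be a real Banach space, Y a real Hilbert space, x0 ∈ X, ρ > 0, and let F : X → Y be Fréchet differentiable on the closed ball B_{2ρ}(x0) and satisfy the tangential cone condition with constant η ∈ [0,1) on B_{2ρ}(x0). Let x̂ ∈ B_{2ρ}(x0) with F(x̂) = y, let y^δ ∈ Y with ‖y^δ − y‖ ≤ δ, and let x ∈ B_{2ρ}(x0). Then ⟪F(x) − y^δ, F'(x)(x̂ − x)⟫ ≤ ‖F(x) − y^δ‖ ((1 + η) δ + η ‖F(x) − y^δ‖) − ‖F(x) − y^δ‖². -/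
/-! Write `r = F x - yδ` for the residual and `e = F xhat - F x - F' x (xhat - x)` for the
linearization error, so that `F' x (xhat - x) = (y - yδ) - r - e`. Cauchy–Schwarz bounds
`⟪r, (y - yδ) - r - e⟫` by `‖r‖ (δ + ‖e‖) - ‖r‖²`, and the tangential cone condition together
with `‖F xhat - F x‖ ≤ δ + ‖r‖` gives `‖e‖ ≤ η (δ + ‖r‖)`. -/

open scoped RealInnerProductSpace

theorem real_inner_sub_self_sub_le {Y : Type*} [NormedAddCommGroup Y] [InnerProductSpace ℝ Y]
    (r n e : Y) :
    ⟪r, n - r - e⟫ ≤ ‖r‖ * (‖n‖ + ‖e‖) - ‖r‖ ^ 2 := by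
  have hn := real_inner_le_norm r n
  have he := neg_le_of_abs_le (abs_real_inner_le_norm r e)
  rw [inner_sub_right, inner_sub_right, real_inner_self_eq_norm_sq]
  linarith

theorem norm_linearization_error_le {E : Type*} [SeminormedAddCommGroup E] {a b l yδ : E}
    {η δ : ℝ} (hη : 0 ≤ η) (hcone : ‖a - b - l‖ ≤ η * ‖a - b‖) (hnoise : ‖yδ - a‖ ≤ δ) :
    ‖a - b - l‖ ≤ η * (δ + ‖b - yδ‖) := by
  have hab : ‖a - b‖ ≤ δ + ‖b - yδ‖ :=
    calc ‖a - b‖ = ‖(a - yδ) - (b - yδ)‖ := by rw [sub_sub_sub_cancel_right]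
      _ ≤ ‖a - yδ‖ + ‖b - yδ‖ := norm_sub_le _ _
      _ ≤ δ + ‖b - yδ‖ := by rw [norm_sub_rev]; gcongr
  exact hcone.trans (by gcongr)

theorem inner_residual_estimate_of_tangential_cone_general
    {X : Type*} [NormedAddCommGroup X] [NormedSpace ℝ X]
    {Y : Type*} [NormedAddCommGroup Y] [InnerProductSpace ℝ Y]
    (x0 : X) (ρ : ℝ)
    (F : X → Y) (F' : X → (X →L[ℝ] Y))
    (η : ℝ) (hη0 : 0 ≤ η)
    (hTCC : ∀ u ∈ Metric.closedBall x0 (2 * ρ), ∀ v ∈ Metric.closedBall x0 (2 * ρ),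
      ‖F u - F v - F' v (u - v)‖ ≤ η * ‖F u - F v‖)
    (xhat : X) (hxhat : xhat ∈ Metric.closedBall x0 (2 * ρ))
    (y : Y) (hsol : F xhat = y)
    (yδ : Y) (δ : ℝ) (hnoise : ‖yδ - y‖ ≤ δ)
    (x : X) (hx : x ∈ Metric.closedBall x0 (2 * ρ)) :
    (inner ℝ (F x - yδ) (F' x (xhat - x)) : ℝ)
      ≤ ‖F x - yδ‖ * ((1 + η) * δ + η * ‖F x - yδ‖) - ‖F x - yδ‖ ^ 2 := by
  subst hsol
  set e := F xhat - F x - F' x (xhat - x)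
  have he : ‖e‖ ≤ η * (δ + ‖F x - yδ‖) :=
    norm_linearization_error_le hη0 (hTCC xhat hxhat x hx) hnoise
  have hdecomp : F' x (xhat - x) = (F xhat - yδ) - (F x - yδ) - e := by
    simp only [e]; abel
  have hsum : ‖F xhat - yδ‖ + ‖e‖ ≤ (1 + η) * δ + η * ‖F x - yδ‖ := by
    rw [norm_sub_rev]; linarith
  calc ⟪F x - yδ, F' x (xhat - x)⟫
      ≤ ‖F x - yδ‖ * (‖F xhat - yδ‖ + ‖e‖) - ‖F x - yδ‖ ^ 2 := by
        rw [hdecomp]; exact real_inner_sub_self_sub_le _ _ _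
    _ ≤ ‖F x - yδ‖ * ((1 + η) * δ + η * ‖F x - yδ‖) - ‖F x - yδ‖ ^ 2 := by gcongr

/-- Let `X` be a real Banach space, `Y` a real Hilbert space,
`F : X → Y` Fréchet differentiable on the closed ball `B_{2ρ}(x0)` and satisfying the
tangential cone condition with constant `η ∈ [0,1)` there.  If `xhat ∈ B_{2ρ}(x0)` with
`F(xhat) = y`, `‖yδ − y‖ ≤ δ`, and `x ∈ B_{2ρ}(x0)`, then
`⟪F(x) − yδ, F'(x)(xhat − x)⟫ ≤ ‖F(x) − yδ‖ ((1+η) δ + η ‖F(x) − yδ‖) − ‖F(x) − yδ‖²`. -/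
theorem inner_residual_estimate_of_tangential_cone
    {X : Type*} [NormedAddCommGroup X] [NormedSpace ℝ X] [CompleteSpace X]
    {Y : Type*} [NormedAddCommGroup Y] [InnerProductSpace ℝ Y] [CompleteSpace Y]
    (x0 : X) (ρ : ℝ) (hρ : 0 < ρ)
    (F : X → Y) (F' : X → (X →L[ℝ] Y))
    (hF : ∀ z ∈ Metric.closedBall x0 (2 * ρ), HasFDerivAt F (F' z) z)
    (η : ℝ) (hη0 : 0 ≤ η) (hη1 : η < 1)
    (hTCC : ∀ u ∈ Metric.closedBall x0 (2 * ρ), ∀ v ∈ Metric.closedBall x0 (2 * ρ),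
      ‖F u - F v - F' v (u - v)‖ ≤ η * ‖F u - F v‖)
    (xhat : X) (hxhat : xhat ∈ Metric.closedBall x0 (2 * ρ))
    (y : Y) (hsol : F xhat = y)
    (yδ : Y) (δ : ℝ) (hnoise : ‖yδ - y‖ ≤ δ)
    (x : X) (hx : x ∈ Metric.closedBall x0 (2 * ρ)) :
    (inner ℝ (F x - yδ) (F' x (xhat - x)) : ℝ)
      ≤ ‖F x - yδ‖ * ((1 + η) * δ + η * ‖F x - yδ‖) - ‖F x - yδ‖ ^ 2 :=
  inner_residual_estimate_of_tangential_cone_general x0 ρ F F' η hη0 hTCC xhat hxhat y hsol yδ δ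
    hnoise x hx
end
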